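/- arXiv:2406.10876 — 6 statements merged into one kernel-verified Lean document; each statement's English description precedes it below -/
import Mathlib

section
/- Let 𝒶 ∈ ℝ \ {-1, 1} and define a(x) = max{x, 𝒶x}. Then for every x ∈ ℝ, (|1-𝒶|/((1-𝒶)(1-𝒶²))) · [𝒶 · a(-|1-𝒶|x/(1-𝒶)) + a(|1-𝒶|x/(1-𝒶))] = max{x, 0}. -/
/-!
Write `c = 1 - 𝒶`. Since `max y (𝒶 * y) = y + max 0 (-c * y)`, and `c * u = |c| * x` for
`u = |c| * x / c`, the two evaluations at `±u` only involve `|c| * max x 0` and `|c| * max (-x) 0`.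
The combination `𝒶 * a (-u) + a u` then collapses to `|c| (1 + 𝒶) max x 0`, and the prefactor
`|c| / (c (1 - 𝒶²))` is its inverse because `|c|² = c²` and `1 - 𝒶² = c (1 + 𝒶)`.
-/

section LeakyReLU

variable {R : Type*} [CommRing R] [LinearOrder R] [IsStrictOrderedRing R]

theorem max_self_mul_eq_add_max_zero (𝒶 y : R) :
    max y (𝒶 * y) = y + max 0 ((𝒶 - 1) * y) := by
  rw [← max_add_add_left, add_zero]
  ring_nf

theorem mul_max_neg_add_max_eq {𝒶 u x : R} (hu : (1 - 𝒶) * u = |1 - 𝒶| * x) :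
    𝒶 * max (-u) (𝒶 * -u) + max u (𝒶 * u) = |1 - 𝒶| * (1 + 𝒶) * max x 0 := by
  have h_neg : (𝒶 - 1) * -u = |1 - 𝒶| * x := by linear_combination hu
  have h_pos : (𝒶 - 1) * u = |1 - 𝒶| * -x := by linear_combination -hu
  have h_scale (y : R) : max 0 (|1 - 𝒶| * y) = |1 - 𝒶| * max y 0 := by
    rw [mul_max_of_nonneg _ _ (abs_nonneg _), mul_zero, max_comm]
  rw [max_self_mul_eq_add_max_zero, max_self_mul_eq_add_max_zero, h_neg, h_pos, h_scale, h_scale]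
  linear_combination hu - |1 - 𝒶| * posPart_sub_negPart x

end LeakyReLU

theorem stmt_1 (𝒶 : ℝ) (h𝒶 : 𝒶 ≠ 1 ∧ 𝒶 ≠ -1) (a : ℝ → ℝ)
    (ha : ∀ x : ℝ, a x = max x (𝒶 * x)) (x : ℝ) :
    (|1 - 𝒶| / ((1 - 𝒶) * (1 - 𝒶 ^ 2))) *
      (𝒶 * a (-|1 - 𝒶| * x / (1 - 𝒶)) + a (|1 - 𝒶| * x / (1 - 𝒶))) = max x 0 := by
  have hc : 1 - 𝒶 ≠ 0 := sub_ne_zero.2 h𝒶.1.symm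
  have hc' : 1 + 𝒶 ≠ 0 := fun h => h𝒶.2 (by linarith)
  have hu : (1 - 𝒶) * (|1 - 𝒶| * x / (1 - 𝒶)) = |1 - 𝒶| * x := mul_div_cancel₀ _ hc
  rw [neg_mul, neg_div, ha, ha, mul_max_neg_add_max_eq hu, ← mul_assoc, ← mul_assoc]
  convert one_mul (max x 0)
  rw [show 1 - 𝒶 ^ 2 = (1 - 𝒶) * (1 + 𝒶) by ring]
  field_simp
  rw [sq_abs]
end

section
/- Let q ∈ (2,∞), ε ∈ (0,1], set ε̃ = ε/4 and q̃ = 1/(q-2). Then for every real x with |x| > ε̃^{-q̃}, |ε̃^{-q̃}|x| − x²| ≤ 2|x|^q ε̃. -/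
theorem stmt_5 (q ε : ℝ) (hq : 2 < q) (hε : ε ∈ Set.Ioc (0 : ℝ) 1) (x : ℝ)
    (hx : (ε / 4) ^ (-(1 / (q - 2))) < |x|) :
    |(ε / 4) ^ (-(1 / (q - 2))) * |x| - x ^ 2| ≤ 2 * |x| ^ q * (ε / 4) := by
  obtain ⟨hε0, hε1⟩ := hε
  set e := ε / 4 with he
  have he0 : 0 < e := by positivity
  set c := e ^ (-(1 / (q - 2))) with hc
  have hc0 : 0 < c := Real.rpow_pos_of_pos he0 _
  have hx0 : 0 < |x| := lt_trans hc0 hx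
  have hq2 : 0 < q - 2 := by linarith
  have h1 : c ^ (q - 2) < |x| ^ (q - 2) := Real.rpow_lt_rpow hc0.le hx hq2
  have h2 : c ^ (q - 2) = e⁻¹ := by
    rw [hc, ← Real.rpow_mul he0.le]
    rw [show -(1 / (q - 2)) * (q - 2) = -1 by field_simp]
    exact Real.rpow_neg_one e
  have h3 : |x| ^ q = x ^ 2 * |x| ^ (q - 2) := by
    rw [show q = 2 + (q - 2) by ring, Real.rpow_add hx0, Real.rpow_two, sq_abs]
    ring_nf
  have hxne : x ≠ 0 := abs_pos.mp hx0
  have hx2 : (0:ℝ) < x ^ 2 := by positivity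
  have h4 : x ^ 2 ≤ e * |x| ^ q := by
    rw [h3]
    have : e⁻¹ ≤ |x| ^ (q - 2) := by rw [← h2]; exact h1.le
    calc x ^ 2 = e * (x ^ 2 * e⁻¹) := by field_simp
    _ ≤ e * (x ^ 2 * |x| ^ (q - 2)) := by
        apply mul_le_mul_of_nonneg_left _ he0.le
        exact mul_le_mul_of_nonneg_left this hx2.le
  have h5 : c * |x| ≤ x ^ 2 := by
    have := mul_le_mul_of_nonneg_right hx.le hx0.le
    nlinarith [sq_abs x]
  rw [abs_of_nonpos (by linarith)]
  have hcx : 0 < c * |x| := mul_pos hc0 hx0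
  have hxq : 0 ≤ |x| ^ q := (Real.rpow_pos_of_pos hx0 q).le
  nlinarith
end

section
/- Let T > 0 and let W^d be a standard d-dimensional Brownian motion on [0,T] for each d ∈ ℕ. Then for all d ∈ ℕ, 𝔭 ∈ [1,∞), and s ∈ [0,T], E[‖W^d_s‖^𝔭] ≤ 1 + (1 + 2T)^𝔭 (d/2 + 𝔭)^𝔭. -/
/-!
The squared coordinates of `W_s` are independent with the moments of a Gamma law of shape `1/2`
and scale `2s`, and such moment sequences add up under independent sums by the Chu–Vandermonde
identity for rising factorials. Hence `E[‖W_s‖^(2K)] = (2s)^K (d/2)(d/2 + 1)⋯(d/2 + K - 1)`, the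
chi-square moment. For `K = ⌈𝔭/2⌉` we have `‖x‖^𝔭 ≤ 1 + ‖x‖^(2K)` and `K ≤ 𝔭`, and the product is
at most `(2s (d/2 + K))^K ≤ ((1 + 2T)(d/2 + 𝔭))^𝔭`.
-/

open MeasureTheory ProbabilityTheory

/-- `W` is a standard `d`-dimensional Brownian motion on the probability space `(Ω, P)`:
it starts at `0`, has continuous sample paths, is measurable at each time, its increments
over `[s, t]` (for `0 ≤ s ≤ t`) have independent coordinates, each distributed according
to a centered Gaussian with variance `t - s`, and it has independent increments. -/
def IsStdBrownianMotion {Ω : Type*} [MeasurableSpace Ω] (P : Measure Ω) (d : ℕ)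
    (W : ℝ → Ω → EuclideanSpace ℝ (Fin d)) : Prop :=
  (∀ ω, W 0 ω = 0) ∧
  (∀ ω, Continuous fun t => W t ω) ∧
  (∀ t : ℝ, Measurable (W t)) ∧
  (∀ s t : ℝ, 0 ≤ s → s ≤ t → ∀ i : Fin d,
    P.map (fun ω => W t ω i - W s ω i) = gaussianReal 0 (Real.toNNReal (t - s))) ∧
  (∀ s t : ℝ, 0 ≤ s → s ≤ t →
    iIndepFun
      (fun i ω => W t ω i - W s ω i) P) ∧
  (∀ (n : ℕ) (u : ℕ → ℝ), Monotone u → 0 ≤ u 0 →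
    iIndepFun
      (fun (j : Fin n) ω => W (u (j + 1)) ω - W (u j) ω) P)

section

open Polynomial Finset Real
open scoped NNReal

theorem ascPochhammer_eval_add {R : Type*} [CommRing R] (a b : R) (k : ℕ) :
    (ascPochhammer R k).eval (a + b) = ∑ ij ∈ antidiagonal k,
      (k.choose ij.1 : R) * ((ascPochhammer R ij.1).eval a * (ascPochhammer R ij.2).eval b) := by
  have hdesc (r : R) (n : ℕ) : (descPochhammer R n).eval r = (descPochhammer ℤ n).smeval r := by
    rw [← descPochhammer_map (Int.castRingHom R), eval_map, ← eval₂_smulOneHom_eq_smeval]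
    exact congrArg (fun f => eval₂ f r _) (Subsingleton.elim _ _)
  have hasc (r : R) (n : ℕ) :
      (ascPochhammer R n).eval r = (-1) ^ n * (descPochhammer ℤ n).smeval (-r) := by
    rw [← hdesc, ← ascPochhammer_eval_neg_eq_descPochhammer, neg_neg]
  rw [hasc, neg_add, Ring.descPochhammer_smeval_add _ (Commute.all _ _), mul_sum]
  refine sum_congr rfl fun ij hij => ?_
  rw [hasc, hasc, ← mem_antidiagonal.mp hij, pow_add]
  ring

theorem ascPochhammer_eval_le_add_pow {S : Type*} [CommSemiring S] [PartialOrder S]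
    [IsOrderedRing S] {x : S} (hx : 0 ≤ x) (k : ℕ) : (ascPochhammer S k).eval x ≤ (x + k) ^ k := by
  induction k with
  | zero => simp
  | succ k ih =>
    rw [ascPochhammer_succ_eval, pow_succ]
    have hxk : 0 ≤ x + k := add_nonneg hx k.cast_nonneg
    have hstep : x + k ≤ x + (k + 1 : ℕ) := by gcongr; exact Nat.le_succ k
    gcongr
    exact ih.trans (pow_le_pow_left₀ hxk hstep k)

lemma integrable_pow_mul_exp_neg_mul_sq {b : ℝ} (hb : 0 < b) (n : ℕ) :
    Integrable fun x : ℝ => x ^ n * exp (-b * x ^ 2) := by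
  simpa [rpow_natCast] using
    integrable_rpow_mul_exp_neg_mul_sq hb (s := n) (by linarith [n.cast_nonneg (α := ℝ)])

lemma integral_pow_add_two_mul_exp_neg_mul_sq {b : ℝ} (hb : 0 < b) (n : ℕ) :
    ∫ x : ℝ, x ^ (n + 2) * exp (-b * x ^ 2)
      = (n + 1) / (2 * b) * ∫ x : ℝ, x ^ n * exp (-b * x ^ 2) := by
  have hderiv : ∀ x : ℝ, HasDerivAt (fun x => x ^ (n + 1) * exp (-b * x ^ 2))
      ((n + 1) * (x ^ n * exp (-b * x ^ 2)) - 2 * b * (x ^ (n + 2) * exp (-b * x ^ 2))) x := by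
    intro x
    refine ((hasDerivAt_pow (n + 1) x).mul ((hasDerivAt_pow 2 x).const_mul (-b)).exp).congr_deriv ?_
    simp only [Nat.add_sub_cancel, Nat.cast_add, Nat.cast_one, Nat.cast_ofNat]
    ring
  have h := integral_eq_zero_of_hasDerivAt_of_integrable hderiv
    (((integrable_pow_mul_exp_neg_mul_sq hb n).const_mul _).sub
      ((integrable_pow_mul_exp_neg_mul_sq hb (n + 2)).const_mul _))
    (integrable_pow_mul_exp_neg_mul_sq hb (n + 1))
  rw [integral_sub ((integrable_pow_mul_exp_neg_mul_sq hb n).const_mul _)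
    ((integrable_pow_mul_exp_neg_mul_sq hb (n + 2)).const_mul _), integral_const_mul,
    integral_const_mul, sub_eq_zero] at h
  rw [div_mul_eq_mul_div, eq_div_iff (by positivity)]
  linarith

lemma integral_pow_two_mul_mul_exp_neg_mul_sq {b : ℝ} (hb : 0 < b) (k : ℕ) :
    ∫ x : ℝ, x ^ (2 * k) * exp (-b * x ^ 2)
      = √(π / b) * b⁻¹ ^ k * (ascPochhammer ℝ k).eval (1 / 2) := by
  induction k with
  | zero =>
    simp only [mul_zero, pow_zero, one_mul, integral_gaussian, ascPochhammer_zero, eval_one,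
      mul_one]
  | succ k ih =>
    rw [mul_add, mul_one, integral_pow_add_two_mul_exp_neg_mul_sq hb, ih, ascPochhammer_succ_eval,
      pow_succ]
    field_simp
    push_cast
    ring

lemma integral_pow_two_mul_gaussianReal (v : ℝ≥0) (k : ℕ) :
    ∫ x, x ^ (2 * k) ∂gaussianReal 0 v = (2 * v) ^ k * (ascPochhammer ℝ k).eval (1 / 2) := by
  rcases eq_or_ne v 0 with rfl | hv
  · cases k <;> simp [gaussianReal_zero_var]
  have hpdf : ∀ x, gaussianPDFReal 0 v x • x ^ (2 * k)
      = (√(2 * π * v))⁻¹ * (x ^ (2 * k) * exp (-(2 * v : ℝ)⁻¹ * x ^ 2)) := fun x => by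
    rw [gaussianPDFReal, smul_eq_mul, sub_zero]
    ring_nf
  have hsqrt : √(π / (2 * v : ℝ)⁻¹) = √(2 * π * v) := by
    rw [div_inv_eq_mul]; ring_nf
  rw [integral_gaussianReal_eq_integral_smul hv, integral_congr_ae (ae_of_all _ hpdf),
    integral_const_mul, integral_pow_two_mul_mul_exp_neg_mul_sq (by positivity), hsqrt, inv_inv,
    ← mul_assoc, ← mul_assoc, inv_mul_cancel₀ (by positivity), one_mul]

variable {Ω : Type*} [MeasurableSpace Ω] {μ : Measure Ω}

/-- The moments `c ^ k Γ(α + k) / Γ(α)` of the Gamma law with shape `α` and scale `c`. -/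
def HasGammaMoments (μ : Measure Ω) (Y : Ω → ℝ) (α c : ℝ) : Prop :=
  ∀ k : ℕ, Integrable (fun ω => Y ω ^ k) μ ∧ ∫ ω, Y ω ^ k ∂μ = c ^ k * (ascPochhammer ℝ k).eval α

lemma hasGammaMoments_zero [IsProbabilityMeasure μ] (c : ℝ) :
    HasGammaMoments μ (fun _ => 0) 0 c := by
  intro k
  refine ⟨integrable_const _, ?_⟩
  rcases eq_or_ne k 0 with rfl | hk
  · simp
  · simp [hk, ascPochhammer_ne_zero_eval_zero]

lemma HasGammaMoments.add {Y Z : Ω → ℝ} {α β c : ℝ} (hY : HasGammaMoments μ Y α c)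
    (hZ : HasGammaMoments μ Z β c) (hYZ : IndepFun Y Z μ) :
    HasGammaMoments μ (fun ω => Y ω + Z ω) (α + β) c := by
  have hterm (i j : ℕ) : IndepFun (fun ω => Y ω ^ i) (fun ω => Z ω ^ j) μ :=
    hYZ.comp (measurable_id.pow_const i) (measurable_id.pow_const j)
  have hint (i j : ℕ) : Integrable (fun ω => Y ω ^ i * Z ω ^ j) μ :=
    (hterm i j).integrable_mul (hY i).1 (hZ j).1
  intro k
  have hbinom (ω : Ω) : (Y ω + Z ω) ^ k
      = ∑ ij ∈ antidiagonal k, (k.choose ij.1 : ℝ) * (Y ω ^ ij.1 * Z ω ^ ij.2) := by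
    rw [(Commute.all (Y ω) (Z ω)).add_pow' k]
    simp_rw [nsmul_eq_mul]
  simp_rw [hbinom]
  refine ⟨integrable_finsetSum _ fun ij _ => (hint ij.1 ij.2).const_mul _, ?_⟩
  rw [integral_finsetSum _ fun ij _ => (hint ij.1 ij.2).const_mul _, ascPochhammer_eval_add,
    mul_sum]
  refine sum_congr rfl fun ij hij => ?_
  rw [integral_const_mul, (hterm ij.1 ij.2).integral_fun_mul_eq_mul_integral
    (hY ij.1).1.aestronglyMeasurable (hZ ij.2).1.aestronglyMeasurable, (hY ij.1).2, (hZ ij.2).2,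
    ← mem_antidiagonal.mp hij, pow_add]
  ring

lemma hasGammaMoments_sq_of_map_eq_gaussianReal {X : Ω → ℝ} {v : ℝ≥0} (hX : AEMeasurable X μ)
    (hXv : μ.map X = gaussianReal 0 v) :
    HasGammaMoments μ (fun ω => X ω ^ 2) (1 / 2) (2 * v) := by
  intro k
  simp_rw [← pow_mul]
  have hmom : Integrable (fun x : ℝ => x ^ (2 * k)) (μ.map X) := by
    rw [hXv]
    simpa [Even.pow_abs ⟨k, two_mul k⟩] using
      (memLp_id_gaussianReal (μ := 0) (v := v) (2 * k : ℕ)).integrable_norm_pow'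
  refine ⟨(integrable_map_measure hmom.aestronglyMeasurable hX).mp hmom, ?_⟩
  rw [← integral_map hX hmom.aestronglyMeasurable, hXv, integral_pow_two_mul_gaussianReal]

lemma hasGammaMoments_sum_sq {ι : Type*} [IsProbabilityMeasure μ] {X : ι → Ω → ℝ} {v : ℝ≥0}
    (hX : ∀ i, Measurable (X i)) (hXv : ∀ i, μ.map (X i) = gaussianReal 0 v)
    (hindep : iIndepFun X μ) (F : Finset ι) :
    HasGammaMoments μ (fun ω => ∑ i ∈ F, X i ω ^ 2) (#F / 2) (2 * v) := by
  classical
  induction F using Finset.induction_on with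
  | empty => simpa using hasGammaMoments_zero (μ := μ) (2 * v)
  | insert a F ha ih =>
    have hindep' : IndepFun (fun ω => X a ω ^ 2) (fun ω => ∑ i ∈ F, X i ω ^ 2) μ := by
      simpa only [Function.comp_def, Finset.sum_fn] using ((hindep.comp (fun _ x => x ^ 2)
        (fun _ => measurable_id.pow_const 2)).indepFun_finsetSum_of_notMem
          (fun i => (hX i).pow_const 2) ha).symm
    have h :=
      (hasGammaMoments_sq_of_map_eq_gaussianReal (hX a).aemeasurable (hXv a)).add ih hindep'
    simp_rw [sum_insert ha, card_insert_of_notMem ha]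
    convert h using 2
    push_cast
    ring

lemma rpow_le_one_add_pow {x p : ℝ} (hx : 0 ≤ x) (hp : 0 ≤ p) {n : ℕ} (hpn : p ≤ n) :
    x ^ p ≤ 1 + x ^ n := by
  rcases le_or_gt x 1 with hx1 | hx1
  · linarith [rpow_le_one hx hx1 hp, pow_nonneg hx n]
  · rw [← rpow_natCast]
    linarith [rpow_le_rpow_of_exponent_le hx1.le hpn]

lemma integral_rpow_le_one_add_integral_pow [IsProbabilityMeasure μ] {f : Ω → ℝ}
    (hf : AEMeasurable f μ) (hf0 : ∀ ω, 0 ≤ f ω)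
    {p : ℝ} (hp : 0 ≤ p) {n : ℕ} (hpn : p ≤ n) (hfn : Integrable (fun ω => f ω ^ n) μ) :
    ∫ ω, f ω ^ p ∂μ ≤ 1 + ∫ ω, f ω ^ n ∂μ := by
  have hbound (ω : Ω) : f ω ^ p ≤ 1 + f ω ^ n := rpow_le_one_add_pow (hf0 ω) hp hpn
  have hdom : Integrable (fun ω => 1 + f ω ^ n) μ := (integrable_const 1).add hfn
  have hfp : Integrable (fun ω => f ω ^ p) μ :=
    hdom.mono' (hf.pow_const p).aestronglyMeasurable
      (ae_of_all _ fun ω => by rw [norm_of_nonneg (rpow_nonneg (hf0 ω) p)]; exact hbound ω)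
  calc ∫ ω, f ω ^ p ∂μ ≤ ∫ ω, 1 + f ω ^ n ∂μ := integral_mono hfp hdom hbound
    _ = 1 + ∫ ω, f ω ^ n ∂μ := by rw [integral_add (integrable_const 1) hfn]; simp

lemma two_mul_pow_mul_ascPochhammer_le {s T x p : ℝ} (hs : 0 ≤ s) (hsT : s ≤ T) (hx : 0 ≤ x)
    (hp : 1 ≤ p) : (2 * s) ^ ⌈p / 2⌉₊ * (ascPochhammer ℝ ⌈p / 2⌉₊).eval x
      ≤ (1 + 2 * T) ^ p * (x + p) ^ p := by
  set K := ⌈p / 2⌉₊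
  have hKp : (K : ℝ) ≤ p := by
    rcases le_or_gt 2 p with h2 | h2
    · linarith [Nat.ceil_lt_add_one (by positivity : 0 ≤ p / 2)]
    · have hK1 : K ≤ 1 := Nat.ceil_le.2 (by push_cast; linarith)
      exact (Nat.cast_le.2 hK1).trans (by simpa using hp)
  have hbase : 1 ≤ (1 + 2 * T) * (x + p) :=
    one_le_mul_of_one_le_of_one_le (by linarith) (by linarith)
  calc (2 * s) ^ K * (ascPochhammer ℝ K).eval x ≤ (2 * s) ^ K * (x + K) ^ K := by
        gcongr; exact ascPochhammer_eval_le_add_pow hx K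
    _ ≤ ((1 + 2 * T) * (x + p)) ^ K := by rw [← mul_pow]; gcongr <;> linarith
    _ ≤ ((1 + 2 * T) * (x + p)) ^ p := by
        rw [← rpow_natCast]; exact rpow_le_rpow_of_exponent_le hbase hKp
    _ = (1 + 2 * T) ^ p * (x + p) ^ p := mul_rpow (by linarith) (by linarith)

end

theorem stmt_9_general {Ω : Type*} [MeasurableSpace Ω] (P : Measure Ω) [IsProbabilityMeasure P]
    (T : ℝ) (W : (d : ℕ) → ℝ → Ω → EuclideanSpace ℝ (Fin d))
    (hW : ∀ d : ℕ, 0 < d → IsStdBrownianMotion P d (W d)) :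
    ∀ d : ℕ, 0 < d → ∀ 𝔭 : ℝ, 1 ≤ 𝔭 → ∀ s ∈ Set.Icc (0 : ℝ) T,
      ∫ ω, ‖W d s ω‖ ^ 𝔭 ∂P ≤ 1 + (1 + 2 * T) ^ 𝔭 * ((d : ℝ) / 2 + 𝔭) ^ 𝔭 := by
  intro d hd 𝔭 hp s hs
  obtain ⟨h0, -, hmeas, hmap, hindep, -⟩ := hW d hd
  have hlaw : HasGammaMoments P (fun ω => ‖W d s ω‖ ^ 2) (d / 2) (2 * s) := by
    have h := hasGammaMoments_sum_sq (μ := P) (X := fun i ω => W d s ω i) (v := s.toNNReal)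
      (fun i => (measurable_pi_apply i).comp ((WithLp.measurable_ofLp 2 _).comp (hmeas s)))
      (fun i => by simpa [h0] using hmap 0 s le_rfl hs.1 i)
      (by simpa [h0] using hindep 0 s le_rfl hs.1) Finset.univ
    simpa [EuclideanSpace.norm_sq_eq, Real.coe_toNNReal s hs.1] using h
  set K := ⌈𝔭 / 2⌉₊
  calc ∫ ω, ‖W d s ω‖ ^ 𝔭 ∂P ≤ 1 + ∫ ω, ‖W d s ω‖ ^ (2 * K) ∂P :=
        integral_rpow_le_one_add_integral_pow (hmeas s).norm.aemeasurable (fun _ => norm_nonneg _)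
          (by linarith) (by push_cast; linarith [Nat.le_ceil (𝔭 / 2)])
          (by simpa only [pow_mul] using (hlaw K).1)
    _ = 1 + (2 * s) ^ K * (ascPochhammer ℝ K).eval ((d : ℝ) / 2) := by
        simp_rw [pow_mul, (hlaw K).2]
    _ ≤ 1 + (1 + 2 * T) ^ 𝔭 * ((d : ℝ) / 2 + 𝔭) ^ 𝔭 := by
        gcongr 1 + ?_
        exact two_mul_pow_mul_ascPochhammer_le hs.1 hs.2 (by positivity) hp

theorem stmt_9 {Ω : Type*} [MeasurableSpace Ω] (P : Measure Ω) [IsProbabilityMeasure P]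
    (T : ℝ) (hT : 0 < T) (W : (d : ℕ) → ℝ → Ω → EuclideanSpace ℝ (Fin d))
    (hW : ∀ d : ℕ, 0 < d → IsStdBrownianMotion P d (W d)) :
    ∀ d : ℕ, 0 < d → ∀ 𝔭 : ℝ, 1 ≤ 𝔭 → ∀ s ∈ Set.Icc (0 : ℝ) T,
      ∫ ω, ‖W d s ω‖ ^ 𝔭 ∂P ≤ 1 + (1 + 2 * T) ^ 𝔭 * ((d : ℝ) / 2 + 𝔭) ^ 𝔭 :=
  stmt_9_general P T W hW
end

section
/- Let L, T ∈ (0,∞), p ∈ [2,∞), 𝔅 ∈ [1,∞), and let (m_k)_{k∈ℕ} ⊆ ℕ satisfy lim inf_{j→∞} m_j = ∞, lim sup_{j→∞} (m_j)^{p/2}/j < ∞, and m_{k+1} ≤ 𝔅 m_k for all k. Define 𝔪_n = [(1+2LT)(m_n)^{-1/2} exp((m_n)^{p/2}/n)]^n. Then lim_{n→∞} 𝔪_n = 0. -/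
open Filter Topology

/-!
Since `m n → ∞`, the factor `(m n)^(-1/2)` tends to `0`, while the bound on `(m n)^(p/2) / n`
keeps the exponential factor bounded. So the base of the `n`-th power tends to `0`, and is
eventually at most `1/2` in absolute value, whence `𝔪 n ≤ (1/2)^n`.
-/

theorem tendsto_pow_self_of_tendsto_zero {R : Type*} [SeminormedRing R] [NormOneClass R]
    {b : ℕ → R} (hb : Tendsto b atTop (𝓝 0)) :
    Tendsto (fun n => b n ^ n) atTop (𝓝 0) := by
  rw [tendsto_zero_iff_norm_tendsto_zero] at hb ⊢
  have hsmall : ∀ᶠ n in atTop, ‖b n‖ ≤ 1 / 2 := hb.eventually (eventually_le_nhds (by norm_num))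
  refine squeeze_zero' (.of_forall fun n => norm_nonneg _) ?_
    (tendsto_pow_atTop_nhds_zero_of_lt_one (r := (1 / 2 : ℝ)) (by norm_num) (by norm_num))
  filter_upwards [hsmall] with n hn
  exact (norm_pow_le _ n).trans (pow_le_pow_left₀ (norm_nonneg _) hn n)

theorem stmt_11_general (L T p : ℝ)
    (m : ℕ → ℕ)
    (hliminf : Tendsto (fun j => (m j : ℝ)) atTop atTop)
    (hlimsup : IsBoundedUnder (· ≤ ·) atTop (fun j => (m j : ℝ) ^ (p / 2) / (j : ℝ))) :
    Tendsto
      (fun n : ℕ =>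
        ((1 + 2 * L * T) * (m n : ℝ) ^ (-(1 : ℝ) / 2) *
            Real.exp ((m n : ℝ) ^ (p / 2) / (n : ℝ))) ^ n)
      atTop (nhds 0) := by
  have hdecay : Tendsto (fun n => (m n : ℝ) ^ (-(1 : ℝ) / 2)) atTop (𝓝 0) := by
    have := (tendsto_rpow_neg_atTop (by norm_num : (0 : ℝ) < 1 / 2)).comp hliminf
    simpa [neg_div, Function.comp_def] using this
  have hexp : IsBoundedUnder (· ≤ ·) atTop
      ((‖·‖) ∘ fun n => Real.exp ((m n : ℝ) ^ (p / 2) / (n : ℝ))) := by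
    simpa [Function.comp_def] using Real.exp_monotone.isBoundedUnder_le_comp hlimsup
  have hfactor : Tendsto (fun n => (1 + 2 * L * T) * (m n : ℝ) ^ (-(1 : ℝ) / 2)) atTop (𝓝 0) := by
    simpa using hdecay.const_mul (1 + 2 * L * T)
  exact tendsto_pow_self_of_tendsto_zero (hfactor.zero_mul_isBoundedUnder_le hexp)

theorem stmt_11 (L T p 𝔅 : ℝ) (hL : 0 < L) (hT : 0 < T) (hp : 2 ≤ p) (h𝔅 : 1 ≤ 𝔅)
    (m : ℕ → ℕ) (hm1 : ∀ k, 1 ≤ m k)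
    (hliminf : Tendsto (fun j => (m j : ℝ)) atTop atTop)
    (hlimsup : IsBoundedUnder (· ≤ ·) atTop (fun j => (m j : ℝ) ^ (p / 2) / (j : ℝ)))
    (hgrow : ∀ k, (m (k + 1) : ℝ) ≤ 𝔅 * m k) :
    Tendsto
      (fun n : ℕ =>
        ((1 + 2 * L * T) * (m n : ℝ) ^ (-(1 : ℝ) / 2) *
            Real.exp ((m n : ℝ) ^ (p / 2) / (n : ℝ))) ^ n)
      atTop (nhds 0) :=
  stmt_11_general L T p m hliminf hlimsup
end

section
/- Let L, T ∈ (0,∞), p ∈ [2,∞), 𝔅 ∈ [1,∞), (m_k)_{k∈ℕ} ⊆ ℕ with lim inf_j m_j = ∞, lim sup_j (m_j)^{p/2}/j < ∞, and m_{k+1} ≤ 𝔅 m_k for all k. For ε ∈ (0,1] let N_ε = inf{n ∈ ℕ : [(1+LT)(m_n)^{-1/2} exp((m_n)^{p/2}/n)]^n ≤ ε}. Then N_ε < ∞ for all ε ∈ (0,1], and for every δ > 0, sup_{ε∈(0,1]} ε^{2+δ} (N_ε)^{1/2} (3 m_{N_ε})^{N_ε} < ∞. -/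
/-!
Eventually `m_n^{p/2} / n ≤ c`, so the base `b_n = (1 + LT) m_n^{-1/2} exp (m_n^{p/2} / n)` is
eventually at most `K m_n^{-1/2}` with `K = (1 + LT) e^c`. Hence `b_n → 0`, and `b_n^n ≤ ε` for
some `n`. If `N_ε = k + 1`, minimality gives `ε ≤ b_k^k`, so the cost times `ε^{2+δ}` is at most
`b_k^{k(2+δ)} √(k+1) (3 m_{k+1})^{k+1} ≤ 3𝔅 m_k (6𝔅 K^{2+δ} m_k^{-δ/2})^k`, which is at most `3𝔅`
for large `k` since `m_k → ∞`; finitely many `k` remain.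
-/

open Filter Topology

section

variable {μ f : ℕ → ℝ}

lemma exists_eventually_mul_rpow_mul_exp_le (hμ0 : ∀ n, 0 ≤ μ n) {a p : ℝ} (ha : 0 ≤ a)
    (hbdd : IsBoundedUnder (· ≤ ·) atTop (fun n => μ n ^ (p / 2) / (n : ℝ))) :
    ∃ K, 0 ≤ K ∧ ∀ᶠ n in atTop, a * μ n ^ (-(1 : ℝ) / 2) * Real.exp (μ n ^ (p / 2) / (n : ℝ))
      ≤ K * μ n ^ (-(1 : ℝ) / 2) := by
  obtain ⟨c, hc⟩ := hbdd
  refine ⟨a * Real.exp c, by positivity, ?_⟩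
  filter_upwards [hc] with n hn
  have hμn := hμ0 n
  calc a * μ n ^ (-(1 : ℝ) / 2) * Real.exp (μ n ^ (p / 2) / (n : ℝ))
      ≤ a * μ n ^ (-(1 : ℝ) / 2) * Real.exp c := by gcongr; exact hn
    _ = a * Real.exp c * μ n ^ (-(1 : ℝ) / 2) := by ring

lemma tendsto_zero_of_le_mul_rpow_neg (hμ : Tendsto μ atTop atTop) {K : ℝ}
    (hf0 : ∀ n, 0 ≤ f n) (hfK : ∀ᶠ n in atTop, f n ≤ K * μ n ^ (-(1 : ℝ) / 2)) :
    Tendsto f atTop (𝓝 0) := by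
  have hlim : Tendsto (fun n => K * μ n ^ (-(1 : ℝ) / 2)) atTop (𝓝 0) := by
    simpa [neg_div] using
      ((tendsto_rpow_neg_atTop (by norm_num : (0 : ℝ) < 1 / 2)).comp hμ).const_mul K
  exact squeeze_zero' (Eventually.of_forall hf0) hfK hlim

lemma nonempty_setOf_pow_le_of_tendsto_zero (hf : Tendsto f atTop (𝓝 0)) {ε : ℝ}
    (hε : 0 < ε) :
    {n : ℕ | 1 ≤ n ∧ f n ^ n ≤ ε}.Nonempty := by
  have hsmall : ∀ᶠ n in atTop, |f n| ≤ min ε 1 :=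
    (tendsto_zero_iff_abs_tendsto_zero f).1 hf |>.eventually (ge_mem_nhds (by positivity))
  obtain ⟨n, hfn, hn⟩ := (hsmall.and (eventually_ge_atTop 1)).exists
  refine ⟨n, hn, ?_⟩
  calc f n ^ n ≤ |f n| ^ n := by rw [← abs_pow]; exact le_abs_self _
    _ ≤ |f n| := pow_le_of_le_one (abs_nonneg _) (hfn.trans (min_le_right _ _)) (by omega)
    _ ≤ ε := hfn.trans (min_le_left _ _)

lemma exists_sInf_eq_succ_and_le_pow {ε : ℝ} (hε : ε ≤ 1)
    (hS : {n : ℕ | 1 ≤ n ∧ f n ^ n ≤ ε}.Nonempty) :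
    ∃ k, sInf {n : ℕ | 1 ≤ n ∧ f n ^ n ≤ ε} = k + 1 ∧ ε ≤ f k ^ k := by
  set N := sInf {n : ℕ | 1 ≤ n ∧ f n ^ n ≤ ε}
  obtain ⟨hN1, -⟩ : 1 ≤ N ∧ _ := Nat.sInf_mem hS
  refine ⟨N - 1, by omega, ?_⟩
  rcases Nat.eq_zero_or_pos (N - 1) with hk | hk
  · rw [hk, pow_zero]; exact hε
  · have hmin := Nat.notMem_of_lt_sInf (Nat.sub_one_lt_of_lt hN1)
    simp only [Set.mem_ofPred_eq, not_and, not_le] at hmin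
    exact (hmin hk).le

lemma eventually_mul_mul_rpow_neg_pow_le_one (hμ : Tendsto μ atTop atTop) {D δ : ℝ}
    (hD : 0 ≤ D) (hδ : 0 < δ) : ∀ᶠ k in atTop, μ k * (D * μ k ^ (-δ)) ^ k ≤ 1 := by
  have hsmall : ∀ᶠ k in atTop, D * μ k ^ (-(δ / 2)) ≤ 1 := by
    have : Tendsto (fun k => D * μ k ^ (-(δ / 2))) atTop (𝓝 0) := by
      simpa using ((tendsto_rpow_neg_atTop (half_pos hδ)).comp hμ).const_mul D
    exact this.eventually (ge_mem_nhds zero_lt_one)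
  filter_upwards [hμ.eventually_ge_atTop 1, hsmall, eventually_ge_atTop ⌈2 / δ⌉₊]
    with k hμ1 hDk hk
  have hμ0 : 0 < μ k := zero_lt_one.trans_le hμ1
  have hk' : 2 / δ ≤ k := (Nat.le_ceil _).trans (by exact_mod_cast hk)
  have hsplit : μ k * (D * μ k ^ (-δ)) ^ k
      = (D * μ k ^ (-(δ / 2))) ^ k * μ k ^ (1 + -(δ / 2) * k) := by
    rw [Real.rpow_add hμ0, Real.rpow_one, Real.rpow_mul_natCast hμ0.le,
      show -δ = -(δ / 2) + -(δ / 2) by ring, Real.rpow_add hμ0]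
    ring
  have hexp : 1 + -(δ / 2) * k ≤ 0 := by
    rw [div_le_iff₀ hδ] at hk'
    nlinarith
  rw [hsplit]
  exact mul_le_one₀ (pow_le_one₀ (by positivity) hDk)
    (Real.rpow_nonneg hμ0.le _) (Real.rpow_le_one_of_one_le_of_nonpos hμ1 hexp)

lemma eventually_rpow_mul_rpow_mul_pow_le (hμ : Tendsto μ atTop atTop) {c 𝔅 K δ : ℝ}
    (hc : 0 ≤ c) (h𝔅 : 0 ≤ 𝔅) (hK : 0 ≤ K) (hδ : 0 < δ)
    (hgrow : ∀ᶠ k in atTop, μ (k + 1) ≤ 𝔅 * μ k) (hf0 : ∀ n, 0 ≤ f n)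
    (hfK : ∀ᶠ n in atTop, f n ≤ K * μ n ^ (-(1 : ℝ) / 2)) :
    ∀ᶠ k in atTop,
      (f k ^ k) ^ (2 + δ) * ((k + 1 : ℕ) : ℝ) ^ ((1 : ℝ) / 2) * (c * μ (k + 1)) ^ (k + 1)
        ≤ c * 𝔅 := by
  have hμ0 : ∀ᶠ k in atTop, 0 < μ k := hμ.eventually_gt_atTop 0
  filter_upwards [hμ0, ((tendsto_add_atTop_iff_nat 1).2 hμ).eventually_gt_atTop 0, hgrow, hfK,
    eventually_mul_mul_rpow_neg_pow_le_one hμ (D := 2 * c * 𝔅 * K ^ (2 + δ))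
      (by positivity) (half_pos hδ)] with k hμk hμk1 hgk hfk hsmall
  have hf : (f k ^ k) ^ (2 + δ) ≤ (K ^ (2 + δ) * μ k ^ (-(1 : ℝ) / 2 * (2 + δ))) ^ k := by
    rw [← Real.rpow_pow_comm (hf0 k)]
    refine pow_le_pow_left₀ (Real.rpow_nonneg (hf0 k) _) ?_ k
    calc f k ^ (2 + δ) ≤ (K * μ k ^ (-(1 : ℝ) / 2)) ^ (2 + δ) := by gcongr; exact hf0 k
      _ = _ := by rw [Real.mul_rpow hK (by positivity), ← Real.rpow_mul hμk.le]
  have hsqrt : ((k + 1 : ℕ) : ℝ) ^ ((1 : ℝ) / 2) ≤ 2 ^ k :=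
    (Real.rpow_le_self_of_one_le (by simp) (by norm_num)).trans
      (by exact_mod_cast Nat.lt_two_pow_self)
  have hstep : (c * μ (k + 1)) ^ (k + 1) ≤ (c * 𝔅 * μ k) ^ (k + 1) := by
    rw [mul_assoc]; gcongr
  have hexp : μ k * μ k ^ (-(1 : ℝ) / 2 * (2 + δ)) = μ k ^ (-(δ / 2)) := by
    rw [← Real.rpow_one_add' hμk.le (by linarith)]; ring_nf
  calc (f k ^ k) ^ (2 + δ) * ((k + 1 : ℕ) : ℝ) ^ ((1 : ℝ) / 2) * (c * μ (k + 1)) ^ (k + 1)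
      ≤ (K ^ (2 + δ) * μ k ^ (-(1 : ℝ) / 2 * (2 + δ))) ^ k * 2 ^ k
          * (c * 𝔅 * μ k) ^ (k + 1) := by
        gcongr
    _ = c * 𝔅 * (μ k * (2 * c * 𝔅 * K ^ (2 + δ)
          * (μ k * μ k ^ (-(1 : ℝ) / 2 * (2 + δ)))) ^ k) := by
        ring
    _ = c * 𝔅 * (μ k * (2 * c * 𝔅 * K ^ (2 + δ) * μ k ^ (-(δ / 2))) ^ k) := by rw [hexp]
    _ ≤ c * 𝔅 := mul_le_of_le_one_right (by positivity) hsmall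

end

theorem stmt_12_general (L T p 𝔅 : ℝ) (hL : 0 < L) (hT : 0 < T) (h𝔅 : 1 ≤ 𝔅)
    (m : ℕ → ℕ)
    (hliminf : Tendsto (fun j => (m j : ℝ)) atTop atTop)
    (hlimsup : IsBoundedUnder (· ≤ ·) atTop (fun j => (m j : ℝ) ^ (p / 2) / (j : ℝ)))
    (hgrow : ∀ k, (m (k + 1) : ℝ) ≤ 𝔅 * m k)
    (N : ℝ → ℕ)
    (hN : ∀ ε ∈ Set.Ioc (0 : ℝ) 1,
      N ε = sInf {n : ℕ | 1 ≤ n ∧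
        ((1 + L * T) * (m n : ℝ) ^ (-(1 : ℝ) / 2) *
            Real.exp ((m n : ℝ) ^ (p / 2) / (n : ℝ))) ^ n ≤ ε}) :
    (∀ ε ∈ Set.Ioc (0 : ℝ) 1,
      {n : ℕ | 1 ≤ n ∧
        ((1 + L * T) * (m n : ℝ) ^ (-(1 : ℝ) / 2) *
            Real.exp ((m n : ℝ) ^ (p / 2) / (n : ℝ))) ^ n ≤ ε}.Nonempty) ∧
    (∀ δ : ℝ, 0 < δ → ∃ C : ℝ, ∀ ε ∈ Set.Ioc (0 : ℝ) 1,
      ε ^ (2 + δ) * (N ε : ℝ) ^ ((1 : ℝ) / 2) * (3 * (m (N ε) : ℝ)) ^ (N ε) ≤ C) := by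
  set f : ℕ → ℝ := fun n => (1 + L * T) * (m n : ℝ) ^ (-(1 : ℝ) / 2) *
    Real.exp ((m n : ℝ) ^ (p / 2) / (n : ℝ))
  have ha : 0 ≤ 1 + L * T := by positivity
  have hf0 : ∀ n, 0 ≤ f n := fun n => by positivity
  obtain ⟨K, hK, hfK⟩ :=
    exists_eventually_mul_rpow_mul_exp_le (fun n => Nat.cast_nonneg (m n)) ha hlimsup
  have hf : Tendsto f atTop (𝓝 0) := tendsto_zero_of_le_mul_rpow_neg hliminf hf0 hfK
  have hne : ∀ ε ∈ Set.Ioc (0 : ℝ) 1, {n : ℕ | 1 ≤ n ∧ f n ^ n ≤ ε}.Nonempty :=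
    fun ε hε => nonempty_setOf_pow_le_of_tendsto_zero hf hε.1
  refine ⟨hne, fun δ hδ => ?_⟩
  obtain ⟨C, hC⟩ := (isBoundedUnder_of_eventually_le
    (eventually_rpow_mul_rpow_mul_pow_le hliminf (c := 3) (by norm_num) (by linarith) hK
      hδ (Eventually.of_forall hgrow) hf0 hfK)).bddAbove_range
  refine ⟨C, fun ε hε => ?_⟩
  obtain ⟨k, hk, hεk⟩ := exists_sInf_eq_succ_and_le_pow hε.2 (hne ε hε)
  rw [hN ε hε, hk]
  calc ε ^ (2 + δ) * ((k + 1 : ℕ) : ℝ) ^ ((1 : ℝ) / 2) * (3 * (m (k + 1) : ℝ)) ^ (k + 1)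
      ≤ (f k ^ k) ^ (2 + δ) * ((k + 1 : ℕ) : ℝ) ^ ((1 : ℝ) / 2)
          * (3 * (m (k + 1) : ℝ)) ^ (k + 1) := by
        gcongr; exact hε.1.le
    _ ≤ C := hC ⟨k, rfl⟩

theorem stmt_12 (L T p 𝔅 : ℝ) (hL : 0 < L) (hT : 0 < T) (hp : 2 ≤ p) (h𝔅 : 1 ≤ 𝔅)
    (m : ℕ → ℕ) (hm1 : ∀ k, 1 ≤ m k)
    (hliminf : Tendsto (fun j => (m j : ℝ)) atTop atTop)
    (hlimsup : IsBoundedUnder (· ≤ ·) atTop (fun j => (m j : ℝ) ^ (p / 2) / (j : ℝ)))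
    (hgrow : ∀ k, (m (k + 1) : ℝ) ≤ 𝔅 * m k)
    (N : ℝ → ℕ)
    (hN : ∀ ε ∈ Set.Ioc (0 : ℝ) 1,
      N ε = sInf {n : ℕ | 1 ≤ n ∧
        ((1 + L * T) * (m n : ℝ) ^ (-(1 : ℝ) / 2) *
            Real.exp ((m n : ℝ) ^ (p / 2) / (n : ℝ))) ^ n ≤ ε}) :
    (∀ ε ∈ Set.Ioc (0 : ℝ) 1,
      {n : ℕ | 1 ≤ n ∧
        ((1 + L * T) * (m n : ℝ) ^ (-(1 : ℝ) / 2) *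
            Real.exp ((m n : ℝ) ^ (p / 2) / (n : ℝ))) ^ n ≤ ε}.Nonempty) ∧
    (∀ δ : ℝ, 0 < δ → ∃ C : ℝ, ∀ ε ∈ Set.Ioc (0 : ℝ) 1,
      ε ^ (2 + δ) * (N ε : ℝ) ^ ((1 : ℝ) / 2) * (3 * (m (N ε) : ℝ)) ^ (N ε) ≤ C) :=
  stmt_12_general L T p 𝔅 hL hT h𝔅 m hliminf hlimsup hgrow N hN
end

section
/- Let q > 2, ε ∈ (0,1], δ = 2^{-1} 4^{-2/(q-2)} ε^{q/(q-2)}, and let g: ℝ → ℝ satisfy |g(x) − f(x)| ≤ δ·max{1, |x|^q} for all x, where f(x) = x² for x ∈ [0,1] and f(x) = max{x, 0} otherwise. Define Φ(x) = ε̃^{-2q̃}(g(ε̃^{q̃}x) + g(−ε̃^{q̃}x)) with ε̃ = ε/4, q̃ = 1/(q−2). Then |Φ(x) − x²| ≤ ε·max{1, |x|^q} for all x ∈ ℝ. -/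
/-!
Write `g = f + e`. The symmetrization `f y + f (-y)` equals `f |y|`, which is `y²` for `|y| ≤ 1`
and lies in `[0, y²]` beyond. With `c = (ε/4)^(1/(q-2))` and `A = c⁻²`, the rescaled sum
`A (g (c x) + g (-(c x)))` thus differs from `x² = A (c x)²` by at most
`2Aδ max(1, |c x|^q) = ε max(1, |c x|^q)`, plus `x²` when `|c x| > 1`. In that case
`|x|^(q-2) > c^(-(q-2)) = 4/ε` gives `x² ≤ (ε/4) |x|^q`, and `c^q ≤ c^(q-2) = ε/4` makes the first
term at most `(ε/4) |x|^q` too.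
-/

open Set

noncomputable def sqReLU (x : ℝ) : ℝ := if x ∈ Icc 0 1 then x ^ 2 else max x 0

lemma eq_sqReLU {f : ℝ → ℝ} (hf : ∀ x ∈ Icc (0 : ℝ) 1, f x = x ^ 2)
    (hf' : ∀ x, x ∉ Icc (0 : ℝ) 1 → f x = max x 0) : f = sqReLU := by
  funext x
  by_cases hx : x ∈ Icc (0 : ℝ) 1
  · rw [hf x hx, sqReLU, if_pos hx]
  · rw [hf' x hx, sqReLU, if_neg hx]

lemma sqReLU_of_nonpos {x : ℝ} (hx : x ≤ 0) : sqReLU x = 0 := by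
  unfold sqReLU
  split_ifs with h
  · simp [le_antisymm hx h.1]
  · exact max_eq_right hx

lemma sqReLU_nonneg (x : ℝ) : 0 ≤ sqReLU x := by
  unfold sqReLU
  split_ifs
  · positivity
  · exact le_max_right _ _

lemma sqReLU_le_sq (x : ℝ) : sqReLU x ≤ x ^ 2 := by
  unfold sqReLU
  split_ifs with h
  · rfl
  · rcases le_or_gt x 0 with hx | hx
    · rw [max_eq_right hx]; positivity
    · have : 1 < x := by by_contra! h'; exact h ⟨hx.le, h'⟩
      rw [max_eq_left hx.le]; nlinarith

lemma sqReLU_add_sqReLU_neg (x : ℝ) : sqReLU x + sqReLU (-x) = sqReLU |x| := by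
  rcases le_total 0 x with hx | hx
  · rw [sqReLU_of_nonpos (neg_nonpos.2 hx), abs_of_nonneg hx, add_zero]
  · rw [sqReLU_of_nonpos hx, abs_of_nonpos hx, zero_add]

lemma sqReLU_abs_of_abs_le_one {x : ℝ} (hx : |x| ≤ 1) : sqReLU |x| = x ^ 2 := by
  rw [sqReLU, if_pos ⟨abs_nonneg x, hx⟩, sq_abs]

lemma abs_sqReLU_abs_sub_sq_le (x : ℝ) : |sqReLU |x| - x ^ 2| ≤ x ^ 2 := by
  have := sqReLU_le_sq |x|
  rw [sq_abs] at this
  rw [abs_of_nonpos (by linarith)]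
  linarith [sqReLU_nonneg |x|]

lemma abs_rescaled_symm_sub_sq_le {g : ℝ → ℝ} {δ q A c : ℝ} (hA : 0 < A) (hAc : A * c ^ 2 = 1)
    (hg : ∀ y, |g y - sqReLU y| ≤ δ * max 1 (|y| ^ q)) (x : ℝ) :
    |A * (g (c * x) + g (-(c * x))) - x ^ 2|
      ≤ A * (2 * δ) * max 1 (|c * x| ^ q) + A * |sqReLU |c * x| - (c * x) ^ 2| := by
  set y := c * x
  have hx : x ^ 2 = A * y ^ 2 := by rw [mul_pow, ← mul_assoc, hAc, one_mul]
  have hsplit : A * (g y + g (-y)) - x ^ 2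
      = A * ((g y - sqReLU y) + (g (-y) - sqReLU (-y)) + (sqReLU |y| - y ^ 2)) := by
    rw [hx, ← sqReLU_add_sqReLU_neg]; ring
  have herr : |g y - sqReLU y| + |g (-y) - sqReLU (-y)| ≤ 2 * δ * max 1 (|y| ^ q) := by
    have hneg := hg (-y)
    rw [abs_neg] at hneg
    linarith [hg y]
  rw [hsplit, abs_mul, abs_of_pos hA]
  calc A * |(g y - sqReLU y) + (g (-y) - sqReLU (-y)) + (sqReLU |y| - y ^ 2)|
      ≤ A * (|g y - sqReLU y| + |g (-y) - sqReLU (-y)| + |sqReLU |y| - y ^ 2|) := by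
        gcongr; exact abs_add_three _ _ _
    _ ≤ A * (2 * δ * max 1 (|y| ^ q) + |sqReLU |y| - y ^ 2|) := by gcongr
    _ = _ := by ring

lemma rpow_neg_two_div_mul_rpow_one_div_sq {a : ℝ} (ha : 0 < a) (p : ℝ) :
    a ^ (-(2 / p)) * (a ^ (1 / p)) ^ 2 = 1 := by
  rw [← Real.rpow_natCast, ← Real.rpow_mul ha.le, ← Real.rpow_add ha]
  rw [show -(2 / p) + 1 / p * ((2 : ℕ) : ℝ) = 0 by push_cast; ring, Real.rpow_zero]

lemma quarter_rpow_mul_two_mul_accuracy {q ε : ℝ} (hq : q ≠ 2) (hε : 0 < ε) :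
    (ε / 4) ^ (-(2 / (q - 2))) * (2 * (2⁻¹ * 4 ^ (-(2 / (q - 2))) * ε ^ (q / (q - 2)))) = ε := by
  have hexp : -(2 / (q - 2)) + q / (q - 2) = 1 := by
    field_simp [sub_ne_zero.2 hq]; ring
  have h4 : (4 : ℝ) ^ (-(2 / (q - 2))) ≠ 0 := by positivity
  rw [Real.div_rpow hε.le (by norm_num)]
  calc ε ^ (-(2 / (q - 2))) / 4 ^ (-(2 / (q - 2)))
        * (2 * (2⁻¹ * 4 ^ (-(2 / (q - 2))) * ε ^ (q / (q - 2))))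
      = ε ^ (-(2 / (q - 2)) + q / (q - 2)) := by rw [Real.rpow_add hε]; field_simp
    _ = ε := by rw [hexp, Real.rpow_one]

lemma sq_le_rpow_mul_rpow_of_one_lt_mul_abs {c q x : ℝ} (hc : 0 < c) (hq : 2 ≤ q)
    (h : 1 < c * |x|) : x ^ 2 ≤ c ^ (q - 2) * |x| ^ q := by
  have hx : 0 < |x| := pos_of_mul_pos_right (one_pos.trans h) hc.le
  have hsplit : c ^ (q - 2) * |x| ^ q = (c * |x|) ^ (q - 2) * x ^ 2 := by
    rw [Real.mul_rpow hc.le hx.le, Real.rpow_sub hx, ← sq_abs x, ← Real.rpow_natCast]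
    field_simp
    norm_num
  rw [hsplit]
  exact le_mul_of_one_le_left (sq_nonneg x) (Real.one_le_rpow h.le (by linarith))

lemma mul_abs_sqReLU_abs_sub_sq_le {A c : ℝ} (hA : 0 ≤ A) (hAc : A * c ^ 2 = 1) (x : ℝ) :
    A * |sqReLU |c * x| - (c * x) ^ 2| ≤ x ^ 2 :=
  calc _ ≤ A * (c * x) ^ 2 := by gcongr; exact abs_sqReLU_abs_sub_sq_le _
    _ = x ^ 2 := by rw [mul_pow, ← mul_assoc, hAc, one_mul]

lemma mul_abs_mul_rpow_add_sq_le {c q ε x : ℝ} (hq : 2 < q) (hε0 : 0 ≤ ε) (hε1 : ε ≤ 1)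
    (hc : 0 < c) (hcp : c ^ (q - 2) = ε / 4) (h : 1 < |c * x|) :
    ε * |c * x| ^ q + x ^ 2 ≤ ε * |x| ^ q := by
  have hc1 : c ≤ 1 := by
    by_contra! hc1
    linarith [Real.one_lt_rpow hc1 (sub_pos.2 hq)]
  have hcx : 1 < c * |x| := by rwa [abs_mul, abs_of_pos hc] at h
  have hcxq : |c * x| ^ q ≤ ε / 4 * |x| ^ q := by
    rw [abs_mul, abs_of_pos hc, Real.mul_rpow hc.le (abs_nonneg x), ← hcp]
    exact mul_le_mul_of_nonneg_right (Real.rpow_le_rpow_of_exponent_ge hc hc1 (by linarith))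
      (by positivity)
  have hx2 := sq_le_rpow_mul_rpow_of_one_lt_mul_abs hc hq.le hcx
  rw [hcp] at hx2
  nlinarith [mul_le_mul_of_nonneg_left hcxq hε0, Real.rpow_nonneg (abs_nonneg x) q]

theorem stmt_15 (q ε : ℝ) (hq : 2 < q) (hε : ε ∈ Set.Ioc (0 : ℝ) 1) (f g : ℝ → ℝ)
    (hf : ∀ x ∈ Set.Icc (0 : ℝ) 1, f x = x ^ 2)
    (hf' : ∀ x : ℝ, x ∉ Set.Icc (0 : ℝ) 1 → f x = max x 0)
    (hg : ∀ x : ℝ,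
      |g x - f x| ≤ 2⁻¹ * (4 : ℝ) ^ (-(2 / (q - 2))) * ε ^ (q / (q - 2)) * max 1 (|x| ^ q)) :
    ∀ x : ℝ,
      |(ε / 4) ^ (-(2 / (q - 2))) *
          (g ((ε / 4) ^ (1 / (q - 2)) * x) + g (-((ε / 4) ^ (1 / (q - 2)) * x))) - x ^ 2|
        ≤ ε * max 1 (|x| ^ q) := by
  obtain ⟨hε0, hε1⟩ := hε
  rw [eq_sqReLU hf hf'] at hg
  intro x
  have hε4 : 0 < ε / 4 := by positivity
  set c := (ε / 4) ^ (1 / (q - 2)) with hc_def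
  have hc : 0 < c := by positivity
  have hcp : c ^ (q - 2) = ε / 4 := by
    rw [hc_def, ← Real.rpow_mul hε4.le, one_div_mul_cancel (by linarith), Real.rpow_one]
  have hAc := rpow_neg_two_div_mul_rpow_one_div_sq hε4 (q - 2)
  have key := abs_rescaled_symm_sub_sq_le (by positivity) hAc hg x
  rw [quarter_rpow_mul_two_mul_accuracy hq.ne' hε0] at key
  rcases le_or_gt |c * x| 1 with hsmall | hlarge
  · rw [sqReLU_abs_of_abs_le_one hsmall, sub_self, abs_zero, mul_zero, add_zero,
      max_eq_left (Real.rpow_le_one (abs_nonneg _) hsmall (by linarith)), mul_one] at key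
    exact key.trans (le_mul_of_one_le_right hε0.le (le_max_left _ _))
  · rw [max_eq_right (Real.one_le_rpow hlarge.le (by linarith))] at key
    linarith [mul_abs_sqReLU_abs_sub_sq_le (by positivity) hAc x,
      mul_abs_mul_rpow_add_sq_le hq hε0.le hε1 hc hcp hlarge,
      mul_le_mul_of_nonneg_left (le_max_right 1 (|x| ^ q)) hε0.le]
end
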